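/- For M > log 3, the set A_M = { α ∈ ℝ \ ℚ : log m_{k+1}(α)/m_k(α) ≤ M for all k ≥ 0 } satisfies ⋂_{n/m} { α : |α − n/m| ≥ 1/(m e^{Mm}) } ∩ (ℝ\ℚ) ⊆ A_M ⊆ ⋂_{n/m} { α : |α − n/m| > 1/(2m e^{Mm}) }, where the intersections run over all rationals n/m in lowest terms with m ≥ 1. -/

import Mathlib

/-- The Gauss-map iterates for the continued fraction expansion of `α`. -/
noncomputable def cfXi (α : ℝ) : ℕ → ℝ
  | 0 => Int.fract α
  | k + 1 => Int.fract (cfXi α k)⁻¹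

/-- The partial quotients of the continued fraction expansion of `α`. -/
noncomputable def cfA (α : ℝ) : ℕ → ℤ
  | 0 => ⌊α⌋
  | k + 1 => ⌊(cfXi α k)⁻¹⌋

/-- Denominators `m_k` of the convergents: `m_0 = 1`, `m_1 = a_1`,
`m_{k+2} = a_{k+2} m_{k+1} + m_k`. -/
noncomputable def cfM (α : ℝ) : ℕ → ℤ
  | 0 => 1
  | 1 => cfA α 1
  | k + 2 => cfA α (k + 2) * cfM α (k + 1) + cfM α k

/-- Numerators `n_k` of the convergents: `n_0 = a_0`, `n_1 = a_1 a_0 + 1`,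
`n_{k+2} = a_{k+2} n_{k+1} + n_k`. -/
noncomputable def cfN (α : ℝ) : ℕ → ℤ
  | 0 => cfA α 0
  | 1 => cfA α 1 * cfA α 0 + 1
  | k + 2 => cfA α (k + 2) * cfN α (k + 1) + cfN α k

/-!
Write `E_k = m_k α - n_k`. The recursion gives `E_{k+1} = -ξ_{k+1} E_k`, so consecutive errors
have opposite signs, and together with `n_{k+1} m_k - n_k m_{k+1} = (-1)^k` this yields
`m_{k+1} |E_k| + m_k |E_{k+1}| = 1`; since `m_{k+2} ≥ 2 m_k`, it follows that
`1/(2 m_{k+1}) < |E_k| < 1/m_{k+1}`.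
If `α` stays `1/(m e^{Mm})` away from every reduced `n/m`, taking `n/m = n_k/m_k` gives
`m_{k+1} < e^{M m_k}`. Conversely, if `m_k ≤ m < m_{k+1}`, the best approximation property
`|m α - n| ≥ |E_k|` gives `|m α - n| > 1/(2 m_{k+1}) ≥ 1/(2 e^{M m_k}) ≥ 1/(2 e^{M m})`.
-/

lemma abs_sub_div_eq_abs_mul_sub_div (x a : ℝ) {c : ℝ} (hc : 0 < c) :
    |x - a / c| = |c * x - a| / c := by
  rw [← abs_of_pos hc, ← abs_div, abs_of_pos hc, sub_div, mul_div_cancel_left₀ _ hc.ne']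

noncomputable def cfErr (α : ℝ) (k : ℕ) : ℝ := (cfM α k : ℝ) * α - (cfN α k : ℝ)

lemma cfA_succ_eq (α : ℝ) (k : ℕ) :
    (cfA α (k + 1) : ℝ) = (cfXi α k)⁻¹ - cfXi α (k + 1) := by
  rw [cfA, cfXi, Int.fract]
  ring

lemma cfN_succ_mul_cfM_sub (α : ℝ) :
    ∀ k, cfN α (k + 1) * cfM α k - cfN α k * cfM α (k + 1) = (-1) ^ k
  | 0 => by simp only [cfN, cfM]; ring
  | k + 1 => by
    rw [cfN, cfM, pow_succ, ← cfN_succ_mul_cfM_sub α k]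
    ring

lemma exists_cfM_cfN_combination (α : ℝ) (k : ℕ) (m n : ℤ) :
    ∃ x y : ℤ, x * cfM α k + y * cfM α (k + 1) = m ∧ x * cfN α k + y * cfN α (k + 1) = n := by
  have hdet := cfN_succ_mul_cfM_sub α k
  have hsq : (-1 : ℤ) ^ k * (-1) ^ k = 1 := by rw [← mul_pow]; norm_num
  refine ⟨(-1) ^ k * (m * cfN α (k + 1) - n * cfM α (k + 1)),
    (-1) ^ k * (n * cfM α k - m * cfN α k), ?_, ?_⟩
  · linear_combination (m * (-1) ^ k) * hdet + m * hsq
  · linear_combination (n * (-1) ^ k) * hdet + n * hsq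

lemma gcd_cfN_cfM (α : ℝ) (k : ℕ) : Int.gcd (cfN α k) (cfM α k) = 1 := by
  have hsq : (-1 : ℤ) ^ k * (-1) ^ k = 1 := by rw [← mul_pow]; norm_num
  exact Int.isCoprime_iff_gcd_eq_one.1 ⟨-(-1) ^ k * cfM α (k + 1), (-1) ^ k * cfN α (k + 1), by
    linear_combination (-1) ^ k * cfN_succ_mul_cfM_sub α k + hsq⟩

lemma cfErr_zero (α : ℝ) : cfErr α 0 = cfXi α 0 := by
  simp only [cfErr, cfM, cfN, cfA, cfXi, Int.fract]
  push_cast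
  ring

lemma cfErr_one (α : ℝ) : cfErr α 1 = cfA α 1 * cfXi α 0 - 1 := by
  simp only [cfErr, cfM, cfN, cfA, cfXi, Int.fract]
  push_cast
  ring

lemma cfErr_add_two (α : ℝ) (k : ℕ) :
    cfErr α (k + 2) = cfA α (k + 2) * cfErr α (k + 1) + cfErr α k := by
  simp only [cfErr, cfM, cfN]
  push_cast
  ring

section Irrational

variable {α : ℝ} (hα : Irrational α)
include hα

lemma irrational_cfXi (k : ℕ) : Irrational (cfXi α k) := by
  induction k with
  | zero => exact hα.sub_intCast ⌊α⌋
  | succ k ih => exact ih.inv.sub_intCast _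

lemma cfXi_pos (k : ℕ) : 0 < cfXi α k := by
  cases k with
  | zero => exact Int.fract_pos.2 (hα.ne_int ⌊α⌋)
  | succ k => exact Int.fract_pos.2 ((irrational_cfXi hα k).inv.ne_int _)

lemma one_le_cfA_succ (k : ℕ) : 1 ≤ cfA α (k + 1) := by
  have hlt : cfXi α k < 1 := by cases k <;> exact Int.fract_lt_one _
  exact Int.le_floor.2 (by exact_mod_cast (one_lt_inv₀ (cfXi_pos hα k)).2 hlt |>.le)

lemma one_le_cfM : ∀ k, 1 ≤ cfM α k
  | 0 => le_rfl
  | 1 => one_le_cfA_succ hα 0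
  | k + 2 => by
    rw [cfM]
    nlinarith [one_le_cfA_succ hα (k + 1), one_le_cfM k, one_le_cfM (k + 1)]

lemma cfM_add_le_cfM_add_two (k : ℕ) : cfM α k + cfM α (k + 1) ≤ cfM α (k + 2) := by
  rw [cfM]
  nlinarith [one_le_cfA_succ hα (k + 1), one_le_cfM hα (k + 1)]

lemma cfM_le_cfM_succ : ∀ k, cfM α k ≤ cfM α (k + 1)
  | 0 => one_le_cfA_succ hα 0
  | k + 1 => by linarith [cfM_add_le_cfM_add_two hα k, one_le_cfM hα k]

lemma le_cfM : ∀ k : ℕ, (k : ℤ) ≤ cfM α k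
  | 0 => zero_le_one
  | 1 => one_le_cfA_succ hα 0
  | k + 2 => by
    have := le_cfM (k + 1)
    have := cfM_add_le_cfM_add_two hα k
    have := one_le_cfM hα k
    omega

lemma exists_cfM_le_lt {m : ℤ} (hm : 1 ≤ m) : ∃ k, cfM α k ≤ m ∧ m < cfM α (k + 1) := by
  suffices ∀ j, m < cfM α j → ∃ k, cfM α k ≤ m ∧ m < cfM α (k + 1) from
    this (m.toNat + 1) (by have := le_cfM hα (m.toNat + 1); omega)
  intro j hj
  induction j with
  | zero => exact absurd hj (not_lt.2 hm)
  | succ j ih => exact if h : m < cfM α j then ih h else ⟨j, not_lt.1 h, hj⟩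

lemma cfA_succ_mul_cfXi (k : ℕ) :
    cfA α (k + 1) * cfXi α k = 1 - cfXi α (k + 1) * cfXi α k := by
  have := (cfXi_pos hα k).ne'
  rw [cfA_succ_eq]
  field_simp

lemma cfErr_succ (k : ℕ) : cfErr α (k + 1) = -cfXi α (k + 1) * cfErr α k := by
  induction k with
  | zero =>
    rw [cfErr_one, cfErr_zero]
    linear_combination cfA_succ_mul_cfXi hα 0
  | succ k ih =>
    rw [cfErr_add_two, ih]
    linear_combination -cfErr α k * cfA_succ_mul_cfXi hα (k + 1)

lemma cfErr_ne_zero (k : ℕ) : cfErr α k ≠ 0 := by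
  induction k with
  | zero => rw [cfErr_zero]; exact (cfXi_pos hα 0).ne'
  | succ k ih => rw [cfErr_succ hα]; exact mul_ne_zero (neg_ne_zero.2 (cfXi_pos hα _).ne') ih

lemma cfErr_mul_cfErr_succ_neg (k : ℕ) : cfErr α k * cfErr α (k + 1) < 0 := by
  rw [cfErr_succ hα]
  nlinarith [cfXi_pos hα (k + 1), mul_self_pos.2 (cfErr_ne_zero hα k)]

lemma cfM_succ_mul_abs_cfErr_add (k : ℕ) :
    (cfM α (k + 1) : ℝ) * |cfErr α k| + cfM α k * |cfErr α (k + 1)| = 1 := by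
  have hM₀ : (0 : ℝ) < cfM α k := by exact_mod_cast one_le_cfM hα k
  have hM₁ : (0 : ℝ) < cfM α (k + 1) := by exact_mod_cast one_le_cfM hα (k + 1)
  have hdet : (cfM α (k + 1) : ℝ) * cfErr α k + -(cfM α k * cfErr α (k + 1)) = (-1) ^ k := by
    have := congrArg (Int.cast : ℤ → ℝ) (cfN_succ_mul_cfM_sub α k)
    push_cast at this
    simp only [cfErr]
    linear_combination this
  have hsign : 0 ≤ (cfM α (k + 1) : ℝ) * cfErr α k * -(cfM α k * cfErr α (k + 1)) := by
    nlinarith [cfErr_mul_cfErr_succ_neg hα k, mul_pos hM₀ hM₁]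
  have := (abs_add_eq_add_abs_iff _ _).2 (mul_nonneg_iff.1 hsign)
  rwa [hdet, abs_neg, abs_mul, abs_mul, abs_of_pos hM₀, abs_of_pos hM₁, abs_pow, abs_neg,
    abs_one, one_pow, eq_comm] at this

lemma abs_cfErr_lt (k : ℕ) : |cfErr α k| < 1 / cfM α (k + 1) := by
  have hM₀ : (0 : ℝ) < cfM α k := by exact_mod_cast one_le_cfM hα k
  have hM₁ : (0 : ℝ) < cfM α (k + 1) := by exact_mod_cast one_le_cfM hα (k + 1)
  rw [lt_div_iff₀ hM₁]
  linarith [cfM_succ_mul_abs_cfErr_add hα k,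
    mul_pos hM₀ (abs_pos.2 (cfErr_ne_zero hα (k + 1)))]

lemma lt_abs_cfErr (k : ℕ) : 1 / (2 * cfM α (k + 1)) < |cfErr α k| := by
  have hM₁ : (0 : ℝ) < cfM α (k + 1) := by exact_mod_cast one_le_cfM hα (k + 1)
  have hM₂ : (0 : ℝ) < cfM α (k + 2) := by exact_mod_cast one_le_cfM hα (k + 2)
  have hgrowth : (2 * cfM α k : ℝ) ≤ cfM α (k + 2) := by
    exact_mod_cast (by linarith [cfM_add_le_cfM_add_two hα k, cfM_le_cfM_succ hα k] :
      2 * cfM α k ≤ cfM α (k + 2))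
  have hnext := abs_cfErr_lt hα (k + 1)
  rw [lt_div_iff₀ hM₂] at hnext
  rw [div_lt_iff₀ (by positivity)]
  nlinarith [cfM_succ_mul_abs_cfErr_add hα k,
    mul_le_mul_of_nonneg_right hgrowth (abs_nonneg (cfErr α (k + 1)))]

lemma abs_cfErr_le_abs_mul_sub {k : ℕ} {m : ℤ} (n : ℤ) (hm : 1 ≤ m) (hmk : m < cfM α (k + 1)) :
    |cfErr α k| ≤ |m * α - n| := by
  obtain ⟨x, y, hxm, hyn⟩ := exists_cfM_cfN_combination α k m n
  -- `1 ≤ m < m_{k+1}` forces `x ≠ 0` and `x y ≤ 0`; as `E_k E_{k+1} < 0`, the two terms of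
  -- `m α - n = x E_k + y E_{k+1}` then have the same sign.
  have hx : x ≠ 0 := by
    rintro rfl
    rcases le_or_gt y 0 with hy | hy <;> nlinarith [one_le_cfM hα (k + 1)]
  have hxy : x * y ≤ 0 := by
    by_contra! h
    rcases mul_pos_iff.1 h with ⟨hx, hy⟩ | ⟨hx, hy⟩ <;>
      nlinarith [one_le_cfM hα k, one_le_cfM hα (k + 1)]
  have herr : (m : ℝ) * α - n = x * cfErr α k + y * cfErr α (k + 1) := by
    rw [← hxm, ← hyn]
    simp only [cfErr]
    push_cast
    ring
  have hsign : 0 ≤ x * cfErr α k * (y * cfErr α (k + 1)) := by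
    have : ((x * y : ℤ) : ℝ) ≤ 0 := by exact_mod_cast hxy
    push_cast at this
    nlinarith [cfErr_mul_cfErr_succ_neg hα k]
  have hx₁ : (1 : ℝ) ≤ |(x : ℝ)| := by exact_mod_cast Int.one_le_abs hx
  rw [herr, (abs_add_eq_add_abs_iff _ _).2 (mul_nonneg_iff.1 hsign), abs_mul, abs_mul]
  nlinarith [abs_nonneg (cfErr α k), abs_nonneg (y : ℝ), abs_nonneg (cfErr α (k + 1))]

lemma abs_sub_cfN_div_cfM (k : ℕ) : |α - cfN α k / cfM α k| = |cfErr α k| / cfM α k :=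
  abs_sub_div_eq_abs_mul_sub_div α _ (by exact_mod_cast one_le_cfM hα k)

lemma log_cfM_succ_div_cfM_le {M : ℝ} (k : ℕ)
    (hfar : 1 / (cfM α k * Real.exp (M * cfM α k)) ≤ |α - cfN α k / cfM α k|) :
    Real.log (cfM α (k + 1)) / cfM α k ≤ M := by
  have hM₀ : (0 : ℝ) < cfM α k := by exact_mod_cast one_le_cfM hα k
  have hM₁ : (0 : ℝ) < cfM α (k + 1) := by exact_mod_cast one_le_cfM hα (k + 1)
  rw [abs_sub_cfN_div_cfM hα, mul_comm, ← div_div, div_le_div_iff_of_pos_right hM₀] at hfar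
  have hlt : (cfM α (k + 1) : ℝ) < Real.exp (M * cfM α k) :=
    (one_div_lt_one_div (Real.exp_pos _) hM₁).1 (hfar.trans_lt (abs_cfErr_lt hα k))
  rw [div_le_iff₀ hM₀, Real.log_le_iff_le_exp hM₁]
  exact hlt.le

lemma one_div_two_mul_exp_lt_abs_sub {M : ℝ}
    (hbound : ∀ k, Real.log (cfM α (k + 1)) / cfM α k ≤ M) (n : ℤ) {m : ℕ} (hm : 1 ≤ m) :
    1 / (2 * m * Real.exp (M * m)) < |α - n / m| := by
  obtain ⟨k, hkm, hmk⟩ := exists_cfM_le_lt hα (m := m) (by exact_mod_cast hm)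
  have hm₀ : (0 : ℝ) < m := by exact_mod_cast hm
  have hM₁ : (0 : ℝ) < cfM α (k + 1) := by exact_mod_cast one_le_cfM hα (k + 1)
  have hM_nonneg : 0 ≤ M := (div_nonneg (Real.log_nonneg (by exact_mod_cast one_le_cfM hα 1))
    (by exact_mod_cast zero_le_one.trans (one_le_cfM hα 0))).trans (hbound 0)
  have hgrowth : (cfM α (k + 1) : ℝ) ≤ Real.exp (M * m) :=
    calc (cfM α (k + 1) : ℝ) ≤ Real.exp (M * cfM α k) :=
          (Real.log_le_iff_le_exp hM₁).1 ((div_le_iff₀ (by exact_mod_cast one_le_cfM hα k)).1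
            (hbound k))
      _ ≤ Real.exp (M * m) :=
          Real.exp_le_exp.2 (mul_le_mul_of_nonneg_left (by exact_mod_cast hkm) hM_nonneg)
  rw [abs_sub_div_eq_abs_mul_sub_div α _ hm₀, mul_right_comm, ← div_div,
    div_lt_div_iff_of_pos_right hm₀]
  calc 1 / (2 * Real.exp (M * m)) ≤ 1 / (2 * cfM α (k + 1)) := by gcongr
    _ < |cfErr α k| := lt_abs_cfErr hα k
    _ ≤ |m * α - n| := by
      exact_mod_cast abs_cfErr_le_abs_mul_sub hα n (by exact_mod_cast hm) hmk

end Irrational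

theorem AM_sandwich_general (M : ℝ) :
    {α : ℝ | Irrational α ∧ ∀ (n : ℤ) (m : ℕ), 1 ≤ m → Int.gcd n (m : ℤ) = 1 →
        1 / ((m : ℝ) * Real.exp (M * m)) ≤ |α - (n : ℝ) / (m : ℝ)|} ⊆
      {α : ℝ | Irrational α ∧ ∀ k : ℕ, Real.log (cfM α (k + 1) : ℝ) / (cfM α k : ℝ) ≤ M} ∧
    {α : ℝ | Irrational α ∧ ∀ k : ℕ, Real.log (cfM α (k + 1) : ℝ) / (cfM α k : ℝ) ≤ M} ⊆
      {α : ℝ | ∀ (n : ℤ) (m : ℕ), 1 ≤ m → Int.gcd n (m : ℤ) = 1 →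
        1 / (2 * (m : ℝ) * Real.exp (M * m)) < |α - (n : ℝ) / (m : ℝ)|} := by
  refine ⟨fun α ⟨hα, hfar⟩ => ⟨hα, fun k => ?_⟩,
    fun α ⟨hα, hbound⟩ n m hm _ => one_div_two_mul_exp_lt_abs_sub hα hbound n hm⟩
  obtain ⟨m, hm⟩ := Int.eq_ofNat_of_zero_le (zero_le_one.trans (one_le_cfM hα k))
  apply log_cfM_succ_div_cfM_le hα k
  have := hfar (cfN α k) m (by have := one_le_cfM hα k; omega) (hm ▸ gcd_cfN_cfM α k)
  simpa [hm] using this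

/-- For `M > log 3`, the set `A_M` of irrationals with `log m_{k+1}(α)/m_k(α) ≤ M` for all `k`
is sandwiched between the set of irrationals at distance `≥ 1/(m e^{Mm})` from every reduced
rational `n/m` and the set of numbers at distance `> 1/(2m e^{Mm})` from every reduced
rational `n/m`. -/
theorem AM_sandwich (M : ℝ) (hM : Real.log 3 < M) :
    {α : ℝ | Irrational α ∧ ∀ (n : ℤ) (m : ℕ), 1 ≤ m → Int.gcd n (m : ℤ) = 1 →
        1 / ((m : ℝ) * Real.exp (M * m)) ≤ |α - (n : ℝ) / (m : ℝ)|} ⊆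
      {α : ℝ | Irrational α ∧ ∀ k : ℕ, Real.log (cfM α (k + 1) : ℝ) / (cfM α k : ℝ) ≤ M} ∧
    {α : ℝ | Irrational α ∧ ∀ k : ℕ, Real.log (cfM α (k + 1) : ℝ) / (cfM α k : ℝ) ≤ M} ⊆
      {α : ℝ | ∀ (n : ℤ) (m : ℕ), 1 ≤ m → Int.gcd n (m : ℤ) = 1 →
        1 / (2 * (m : ℝ) * Real.exp (M * m)) < |α - (n : ℝ) / (m : ℝ)|} :=
  AM_sandwich_general M
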